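/- If C = (1+2v²)C₁ ⊕ (2v+2v²)C₂ ⊕ (v+2v²)C₃ is a cyclic code of length n over R with generator polynomials f₁, f₂, f₃ of C₁, C₂, C₃ (monic divisors of xⁿ−1 in Z₃[x]), then C^⊥ = ⟨(1+2v²)h₁* + (2v+2v²)h₂* + (v+2v²)h₃*⟩ as an ideal of R[x]/(xⁿ−1), where hᵢ(x) = (xⁿ−1)/fᵢ(x) and hᵢ*(x) = x^{deg hᵢ} hᵢ(x^{−1}) is the reciprocal polynomial of hᵢ; moreover |C^⊥| = 3^{deg f₁ + deg f₂ + deg f₃}. The analogous statement holds for negacyclic codes with xⁿ−1 replaced by xⁿ+1. -/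

import Mathlib

/-- The ring `R = Z₃ + vZ₃ + v²Z₃ = Z₃[v]/(v³ - v)`, with elements written
`a + v*b + v²*c` for `a b c : ZMod 3` (stored as the three coordinates). -/
@[ext]
structure R3 : Type where
  a : ZMod 3
  b : ZMod 3
  c : ZMod 3
  deriving DecidableEq

namespace R3

instance : Zero R3 := ⟨⟨0, 0, 0⟩⟩
instance : One R3 := ⟨⟨1, 0, 0⟩⟩
instance : Add R3 := ⟨fun x y => ⟨x.a + y.a, x.b + y.b, x.c + y.c⟩⟩
instance : Neg R3 := ⟨fun x => ⟨-x.a, -x.b, -x.c⟩⟩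
/-- Multiplication induced by `v³ = v` :
`(a+vb+v²c)(a'+vb'+v²c') = aa' + v(ab'+a'b+bc'+b'c) + v²(ac'+a'c+bb'+cc')`. -/
instance : Mul R3 := ⟨fun x y =>
  ⟨x.a * y.a,
   x.a * y.b + x.b * y.a + x.b * y.c + x.c * y.b,
   x.a * y.c + x.c * y.a + x.b * y.b + x.c * y.c⟩⟩

@[simp] lemma zero_a : (0 : R3).a = 0 := rfl
@[simp] lemma zero_b : (0 : R3).b = 0 := rfl
@[simp] lemma zero_c : (0 : R3).c = 0 := rfl
@[simp] lemma one_a : (1 : R3).a = 1 := rfl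
@[simp] lemma one_b : (1 : R3).b = 0 := rfl
@[simp] lemma one_c : (1 : R3).c = 0 := rfl
@[simp] lemma add_a (x y : R3) : (x + y).a = x.a + y.a := rfl
@[simp] lemma add_b (x y : R3) : (x + y).b = x.b + y.b := rfl
@[simp] lemma add_c (x y : R3) : (x + y).c = x.c + y.c := rfl
@[simp] lemma neg_a (x : R3) : (-x).a = -x.a := rfl
@[simp] lemma neg_b (x : R3) : (-x).b = -x.b := rfl
@[simp] lemma neg_c (x : R3) : (-x).c = -x.c := rfl
@[simp] lemma mul_a (x y : R3) : (x * y).a = x.a * y.a := rfl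
@[simp] lemma mul_b (x y : R3) :
    (x * y).b = x.a * y.b + x.b * y.a + x.b * y.c + x.c * y.b := rfl
@[simp] lemma mul_c (x y : R3) :
    (x * y).c = x.a * y.c + x.c * y.a + x.b * y.b + x.c * y.c := rfl

private lemma thm_add_assoc (x y z : R3) : x + y + z = x + (y + z) := by ext <;> simp <;> ring
private lemma thm_zero_add (x : R3) : 0 + x = x := by ext <;> simp
private lemma thm_add_zero (x : R3) : x + 0 = x := by ext <;> simp
private lemma thm_add_comm (x y : R3) : x + y = y + x := by ext <;> simp <;> ring
private lemma thm_mul_assoc (x y z : R3) : x * y * z = x * (y * z) := by ext <;> simp <;> ring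
private lemma thm_one_mul (x : R3) : 1 * x = x := by ext <;> simp
private lemma thm_mul_one (x : R3) : x * 1 = x := by ext <;> simp
private lemma thm_left_distrib (x y z : R3) : x * (y + z) = x * y + x * z := by ext <;> simp <;> ring
private lemma thm_right_distrib (x y z : R3) : (x + y) * z = x * z + y * z := by ext <;> simp <;> ring
private lemma thm_mul_comm (x y : R3) : x * y = y * x := by ext <;> simp <;> ring
private lemma thm_zero_mul (x : R3) : 0 * x = 0 := by ext <;> simp
private lemma thm_mul_zero (x : R3) : x * 0 = 0 := by ext <;> simp
private lemma thm_neg_add_cancel (x : R3) : -x + x = 0 := by ext <;> simp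

instance : CommRing R3 where
  nsmul m x := ⟨m • x.a, m • x.b, m • x.c⟩
  nsmul_zero x := by ext <;> exact zero_smul ℕ _
  nsmul_succ m x := by ext <;> exact succ_nsmul _ _
  zsmul m x := ⟨m • x.a, m • x.b, m • x.c⟩
  zsmul_zero' x := by ext <;> exact zero_smul ℤ _
  zsmul_succ' m x := by ext <;> exact SubNegMonoid.zsmul_succ' _ _
  zsmul_neg' m x := by ext <;> exact SubNegMonoid.zsmul_neg' _ _
  add_assoc := thm_add_assoc
  zero_add := thm_zero_add
  add_zero := thm_add_zero
  add_comm := thm_add_comm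
  mul_assoc := thm_mul_assoc
  one_mul := thm_one_mul
  mul_one := thm_mul_one
  left_distrib := thm_left_distrib
  right_distrib := thm_right_distrib
  mul_comm := thm_mul_comm
  zero_mul := thm_zero_mul
  mul_zero := thm_mul_zero
  neg_add_cancel := thm_neg_add_cancel

/-- The element `v` of `R = Z₃[v]/(v³-v)`. -/
def v : R3 := ⟨0, 1, 0⟩

/-- The natural inclusion `Z₃ → R`. -/
def iota : ZMod 3 →+* R3 where
  toFun t := ⟨t, 0, 0⟩
  map_one' := by ext <;> simp
  map_mul' x y := by ext <;> simp
  map_zero' := by ext <;> simp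
  map_add' x y := by ext <;> simp

instance : Algebra (ZMod 3) R3 := iota.toAlgebra

end R3

open R3 in
/-- The Gray map `φ : R → Z₃³`, `φ(a+vb+v²c) = (a, a+b+c, a+2b+c)`. -/
def gray (r : R3) : ZMod 3 × ZMod 3 × ZMod 3 :=
  (r.a, r.a + r.b + r.c, r.a + 2 * r.b + r.c)

/-- The Gray map extended blockwise to `φ : R^n → Z₃^{3n}`, where `Z₃^{3n}` is
identified with `Z₃^n × Z₃^n × Z₃^n` via the three length-`n` blocks. -/
def grayV {n : ℕ} (r : Fin n → R3) :
    (Fin n → ZMod 3) × (Fin n → ZMod 3) × (Fin n → ZMod 3) :=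
  (fun i => (r i).a,
   fun i => (r i).a + (r i).b + (r i).c,
   fun i => (r i).a + 2 * (r i).b + (r i).c)

/-- Hamming weight on `Z₃^{3n} = Z₃^n × Z₃^n × Z₃^n`. -/
def wtH {n : ℕ} (x : (Fin n → ZMod 3) × (Fin n → ZMod 3) × (Fin n → ZMod 3)) : ℕ :=
  hammingNorm x.1 + hammingNorm x.2.1 + hammingNorm x.2.2

/-- The Lee weight of an element of `R`: the Hamming weight of its Gray image. -/
def wtLee (r : R3) : ℕ :=
  (if r.a ≠ 0 then 1 else 0) + (if r.a + r.b + r.c ≠ 0 then 1 else 0) +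
    (if r.a + 2 * r.b + r.c ≠ 0 then 1 else 0)

/-- The Lee weight on `R^n`, extended additively. -/
def wtLeeV {n : ℕ} (x : Fin n → R3) : ℕ := ∑ i, wtLee (x i)

/-- The cyclic shift `σ(c₀,…,c_{n-1}) = (c_{n-1},c₀,…,c_{n-2})`. -/
def cyc {α : Type*} {n : ℕ} [NeZero n] (c : Fin n → α) : Fin n → α :=
  fun i => c (i - 1)

/-- The negacyclic shift `η(c₀,…,c_{n-1}) = (-c_{n-1},c₀,…,c_{n-2})`. -/
def nega {α : Type*} [Neg α] {n : ℕ} [NeZero n] (c : Fin n → α) : Fin n → α :=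
  fun i => if i = 0 then -c (i - 1) else c (i - 1)

/-- The `λ`-constacyclic shift `(c₀,…,c_{n-1}) ↦ (λc_{n-1},c₀,…,c_{n-2})`. -/
def consta {α : Type*} [Mul α] {n : ℕ} [NeZero n] (lam : α) (c : Fin n → α) : Fin n → α :=
  fun i => if i = 0 then lam * c (i - 1) else c (i - 1)

open Fin.NatCast in
/-- The quasi-cyclic shift `τ_{s,l}` of block length `l` on vectors of length `n = s*l`,
moving the last block of `l` coordinates to the front; equivalently, the cyclic shift
by `l` positions. -/
def shiftBy {α : Type*} {n : ℕ} [NeZero n] (l : ℕ) (c : Fin n → α) : Fin n → α :=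
  fun i => c (i - (l : Fin n))

/-- Apply a map to each of the three blocks of `Z₃^{3n} = Z₃^n × Z₃^n × Z₃^n`. -/
def blockMap {n : ℕ} (f : (Fin n → ZMod 3) → (Fin n → ZMod 3))
    (x : (Fin n → ZMod 3) × (Fin n → ZMod 3) × (Fin n → ZMod 3)) :
    (Fin n → ZMod 3) × (Fin n → ZMod 3) × (Fin n → ZMod 3) :=
  (f x.1, f x.2.1, f x.2.2)

/-- The Euclidean dual of a linear code over `R`. -/
def dualR {n : ℕ} (C : Submodule R3 (Fin n → R3)) : Submodule R3 (Fin n → R3) where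
  carrier := {x | ∀ y ∈ C, ∑ i, x i * y i = 0}
  add_mem' := by
    intro p q hp hq y hy
    simp only [Set.mem_setOf_eq] at *
    simp [Pi.add_apply, add_mul, Finset.sum_add_distrib, hp y hy, hq y hy]
  zero_mem' := by intro y hy; simp
  smul_mem' := by
    intro r p hp y hy
    simp only [Set.mem_setOf_eq] at *
    simp [Pi.smul_apply, smul_eq_mul, mul_assoc, ← Finset.mul_sum, hp y hy]

/-- The Euclidean dual of a ternary linear code. -/
def dualZ {n : ℕ} (C : Submodule (ZMod 3) (Fin n → ZMod 3)) :
    Submodule (ZMod 3) (Fin n → ZMod 3) where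
  carrier := {x | ∀ y ∈ C, ∑ i, x i * y i = 0}
  add_mem' := by
    intro p q hp hq y hy
    simp only [Set.mem_setOf_eq] at *
    simp [Pi.add_apply, add_mul, Finset.sum_add_distrib, hp y hy, hq y hy]
  zero_mem' := by intro y hy; simp
  smul_mem' := by
    intro r p hp y hy
    simp only [Set.mem_setOf_eq] at *
    simp [Pi.smul_apply, smul_eq_mul, mul_assoc, ← Finset.mul_sum, hp y hy]

/-- The Euclidean inner product on `Z₃^{3n} = Z₃^n × Z₃^n × Z₃^n`. -/
def inner3 {n : ℕ} (x y : (Fin n → ZMod 3) × (Fin n → ZMod 3) × (Fin n → ZMod 3)) : ZMod 3 :=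
  ∑ i, x.1 i * y.1 i + ∑ i, x.2.1 i * y.2.1 i + ∑ i, x.2.2 i * y.2.2 i

/-- The Euclidean dual (as a set) of a subset of `Z₃^{3n}`. -/
def dual3Set {n : ℕ} (S : Set ((Fin n → ZMod 3) × (Fin n → ZMod 3) × (Fin n → ZMod 3))) :
    Set ((Fin n → ZMod 3) × (Fin n → ZMod 3) × (Fin n → ZMod 3)) :=
  {x | ∀ y ∈ S, inner3 x y = 0}

/-- The first associated ternary code `C₁ = {a : ∃ b c, a+vb+v²c ∈ C}`. -/
def assoc1 {n : ℕ} (C : Set (Fin n → R3)) : Set (Fin n → ZMod 3) :=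
  {x | ∃ r ∈ C, ∀ i, x i = (r i).a}

/-- The second associated ternary code `C₂ = {a+b+c : a+vb+v²c ∈ C}`. -/
def assoc2 {n : ℕ} (C : Set (Fin n → R3)) : Set (Fin n → ZMod 3) :=
  {x | ∃ r ∈ C, ∀ i, x i = (r i).a + (r i).b + (r i).c}

/-- The third associated ternary code `C₃ = {a+2b+c : a+vb+v²c ∈ C}`. -/
def assoc3 {n : ℕ} (C : Set (Fin n → R3)) : Set (Fin n → ZMod 3) :=
  {x | ∃ r ∈ C, ∀ i, x i = (r i).a + 2 * (r i).b + (r i).c}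

/-- The idempotent `e₁ = 1 + 2v²` of `R`. -/
noncomputable def e1 : R3 := 1 + 2 * R3.v ^ 2
/-- The idempotent `e₂ = 2v + 2v²` of `R`. -/
noncomputable def e2 : R3 := 2 * R3.v + 2 * R3.v ^ 2
/-- The idempotent `e₃ = v + 2v²` of `R`. -/
noncomputable def e3 : R3 := R3.v + 2 * R3.v ^ 2

/-- Coordinatewise inclusion `Z₃^n → R^n`. -/
def emb {n : ℕ} (x : Fin n → ZMod 3) : Fin n → R3 := fun i => R3.iota (x i)

/-- The code `(1+2v²)C₁ ⊕ (2v+2v²)C₂ ⊕ (v+2v²)C₃ ⊆ R^n` built from three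
ternary codes `C₁, C₂, C₃ ⊆ Z₃^n`. -/
def tri {n : ℕ} (C₁ C₂ C₃ : Set (Fin n → ZMod 3)) : Set (Fin n → R3) :=
  {w | ∃ x ∈ C₁, ∃ y ∈ C₂, ∃ z ∈ C₃, w = e1 • emb x + e2 • emb y + e3 • emb z}

open Polynomial in
/-- The polynomial representation `(c₀,…,c_{n-1}) ↦ c₀ + c₁x + … + c_{n-1}x^{n-1}`
of a vector over `Z₃`. -/
noncomputable def toPolyZ {n : ℕ} (c : Fin n → ZMod 3) : Polynomial (ZMod 3) :=
  ∑ i : Fin n, Polynomial.C (c i) * Polynomial.X ^ (i : ℕ)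

open Polynomial in
/-- The polynomial representation of a vector over `R`. -/
noncomputable def toPolyR {n : ℕ} (c : Fin n → R3) : Polynomial R3 :=
  ∑ i : Fin n, Polynomial.C (c i) * Polynomial.X ^ (i : ℕ)

/-- The quotient map `Z₃[x] → Z₃[x]/(xⁿ - ε)`. -/
noncomputable def mkZ (n : ℕ) (ε : ZMod 3) :
    Polynomial (ZMod 3) →+*
      Polynomial (ZMod 3) ⧸ Ideal.span {Polynomial.X ^ n - Polynomial.C ε} :=
  Ideal.Quotient.mk _

/-- The quotient map `R[x] → R[x]/(xⁿ - ε)`. -/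
noncomputable def mkR (n : ℕ) (ε : R3) :
    Polynomial R3 →+* Polynomial R3 ⧸ Ideal.span {Polynomial.X ^ n - Polynomial.C ε} :=
  Ideal.Quotient.mk _

/-- `f` is the generator polynomial of the ternary cyclic (`ε = 1`) resp. negacyclic
(`ε = -1`) code `D` of length `n`: `f` is a monic divisor of `xⁿ - ε` and, under the
polynomial representation, `D` corresponds exactly to the ideal of `Z₃[x]/(xⁿ - ε)`
generated by `f`. -/
def IsGenPolyZ (n : ℕ) (ε : ZMod 3) (D : Set (Fin n → ZMod 3))
    (f : Polynomial (ZMod 3)) : Prop :=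
  f.Monic ∧ f ∣ (Polynomial.X ^ n - Polynomial.C ε) ∧
    {p | ∃ c ∈ D, p = mkZ n ε (toPolyZ c)} = ↑(Ideal.span {mkZ n ε f})

/-!
Write `Rₙ = A[x]/(xⁿ - a)` with `a * a = 1`. Then `x` is a unit with `x⁻¹ = a xⁿ⁻¹`, and the dot
product of two coefficient vectors `c, d` is the constant coefficient of `c(x) d(x⁻¹)`. Hence over
`Z₃` a vector is orthogonal to the code `⟨f⟩` iff `c(x) f(x⁻¹) = 0`; as `x^(deg f) f(x⁻¹) = f*(x)`
and `f* h*` is associate to `xⁿ - a`, this means `c ∈ ⟨h*⟩`, an ideal with `3 ^ deg f` elements.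

Over `R`, the Gray map (evaluation at `v = 0, 1, 2`) is a ring isomorphism `R ≃ Z₃³` sending
`e₁, e₂, e₃` to the standard idempotents. So `C^⊥ ≅ C₁^⊥ × C₂^⊥ × C₃^⊥`, and the induced isomorphism
`R[x]/(xⁿ - ε) ≃ (Z₃[x]/(xⁿ - ε))³` carries `⟨e₁h₁* + e₂h₂* + e₃h₃*⟩` onto `⟨h₁*⟩ × ⟨h₂*⟩ × ⟨h₃*⟩`.
-/

open Polynomial AdjoinRoot

lemma setOf_exists_mem_eq_iff {α β : Type*} (e : α ≃ β) (S : Set α) (T : Set β) :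
    {p | ∃ c ∈ S, p = e c} = T ↔ ∀ c, c ∈ S ↔ e c ∈ T := by
  have : {p | ∃ c ∈ S, p = e c} = e '' S := by
    ext p
    exact ⟨fun ⟨c, hc, hp⟩ => ⟨c, hc, hp.symm⟩, fun ⟨c, hc, hp⟩ => ⟨c, hc, hp.symm⟩⟩
  rw [this, ← e.eq_preimage_iff_image_eq, Set.ext_iff]
  rfl

section CyclicQuotient

variable {A : Type*} [CommRing A] [Nontrivial A] (n : ℕ) [NeZero n] (a : A)

noncomputable def cyclicBasis : Module.Basis (Fin n) A (AdjoinRoot (X ^ n - C a)) :=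
  (powerBasis' (monic_X_pow_sub_C a (NeZero.ne n))).basis.reindex
    (finCongr natDegree_X_pow_sub_C)

lemma cyclicBasis_apply (i : Fin n) : cyclicBasis n a i = root (X ^ n - C a) ^ (i : ℕ) := by
  simp [cyclicBasis, PowerBasis.coe_basis, finCongr]

lemma mk_sum_C_mul_X_pow (c : Fin n → A) :
    mk (X ^ n - C a) (∑ i, C (c i) * X ^ (i : ℕ)) = (cyclicBasis n a).equivFun.symm c := by
  simp [Module.Basis.equivFun_symm_apply, cyclicBasis_apply, Algebra.smul_def,
    AdjoinRoot.algebraMap_eq]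

variable {n a} in
lemma equivFun_root_pow {k : ℕ} (hk : k < n) :
    (cyclicBasis n a).equivFun (root _ ^ k) = Pi.single ⟨k, hk⟩ 1 := by
  ext i
  rw [show root _ ^ k = cyclicBasis n a ⟨k, hk⟩ from (cyclicBasis_apply n a ⟨k, hk⟩).symm,
    Module.Basis.equivFun_self, Pi.single_apply]
  exact if_congr eq_comm rfl rfl

end CyclicQuotient

section RootInv

variable {A : Type*} [CommRing A] {n : ℕ} {a : A}

lemma root_pow_eq_of : root (X ^ n - C a) ^ n = of _ a := by
  rw [← sub_eq_zero, ← mk_X, ← mk_C, ← map_pow, ← map_sub, mk_self]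

variable (a) in
noncomputable def rootInv : AdjoinRoot (X ^ n - C a) := of _ a * root _ ^ (n - 1)

variable [NeZero n] (ha : a * a = 1)
include ha

lemma root_mul_rootInv : root (X ^ n - C a) * rootInv a = 1 := by
  rw [rootInv, mul_left_comm, ← pow_succ', Nat.sub_add_cancel NeZero.one_le, root_pow_eq_of,
    ← map_mul, ha, map_one]

lemma root_pow_mul_rootInv_pow_eq_root_pow {i j : ℕ} (h : j ≤ i) :
    root (X ^ n - C a) ^ i * rootInv a ^ j = root _ ^ (i - j) := by
  rw [← Nat.sub_add_cancel h, pow_add, mul_assoc, ← mul_pow, root_mul_rootInv ha, one_pow,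
    mul_one, Nat.add_sub_cancel]

lemma root_pow_mul_rootInv_pow_eq_rootInv_pow {i j : ℕ} (h : i ≤ j) :
    root (X ^ n - C a) ^ i * rootInv a ^ j = rootInv a ^ (j - i) := by
  rw [← Nat.sub_add_cancel h, pow_add, mul_left_comm, ← mul_pow, root_mul_rootInv ha, one_pow,
    mul_one, Nat.add_sub_cancel]

lemma rootInv_pow_of_le {k : ℕ} (hk : k ≤ n) :
    rootInv a ^ k = of (X ^ n - C a) a * root _ ^ (n - k) :=
  calc rootInv a ^ k = of _ (a * a) * rootInv a ^ k := by rw [ha, map_one, one_mul]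
    _ = of _ a * (root _ ^ n * rootInv a ^ k) := by rw [map_mul, root_pow_eq_of, mul_assoc]
    _ = of _ a * root _ ^ (n - k) := by rw [root_pow_mul_rootInv_pow_eq_root_pow ha hk]

noncomputable def invRootHom : AdjoinRoot (X ^ n - C a) →ₐ[A] AdjoinRoot (X ^ n - C a) :=
  liftAlgHom _ (Algebra.ofId _ _) (rootInv a) <| by
    rw [eval₂_sub, eval₂_X_pow, eval₂_C, rootInv_pow_of_le ha le_rfl, Nat.sub_self, pow_zero,
      mul_one, sub_eq_zero]
    rfl

lemma invRootHom_root : invRootHom ha (root (X ^ n - C a)) = rootInv a := liftAlgHom_root ..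

lemma invRootHom_mk (f : A[X]) :
    invRootHom ha (mk (X ^ n - C a) f) = mk _ f.reverse * rootInv (n := n) a ^ f.natDegree := by
  let : Invertible (rootInv (n := n) a) := invertibleOfLeftInverse _ _ (root_mul_rootInv ha)
  calc invRootHom ha (mk _ f) = eval₂ (of _) (rootInv a) f := rfl
    _ = eval₂ (of _) (root _) f.reverse * rootInv a ^ f.natDegree :=
      (eval₂_reverse_mul_pow _ _ f).symm
    _ = _ := by rw [← AdjoinRoot.algebraMap_eq, ← aeval_def, aeval_eq]

end RootInv

section Duality

variable {A : Type*} [CommRing A] [Nontrivial A] {n : ℕ} [NeZero n] {a : A} (ha : a * a = 1)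
include ha

lemma equivFun_root_pow_mul_rootInv_pow (i j : Fin n) :
    (cyclicBasis n a).equivFun (root _ ^ (i : ℕ) * rootInv a ^ (j : ℕ)) 0 =
      if i = j then 1 else 0 := by
  rcases le_or_gt (j : ℕ) i with hji | hij
  · rw [root_pow_mul_rootInv_pow_eq_root_pow ha hji, equivFun_root_pow (by omega), Pi.single_apply]
    simp only [Fin.ext_iff, Fin.val_zero]
    split_ifs <;> first | rfl | omega
  · rw [root_pow_mul_rootInv_pow_eq_rootInv_pow ha hij.le, rootInv_pow_of_le ha (by omega),
      ← AdjoinRoot.algebraMap_eq, ← Algebra.smul_def, map_smul, equivFun_root_pow (by omega),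
      Pi.smul_apply, Pi.single_apply, if_neg (by simp [Fin.ext_iff]; omega), smul_zero,
      if_neg (by simp [Fin.ext_iff]; omega)]

lemma dotProduct_equivFun (z w : AdjoinRoot (X ^ n - C a)) :
    (cyclicBasis n a).equivFun z ⬝ᵥ (cyclicBasis n a).equivFun w =
      (cyclicBasis n a).equivFun (z * invRootHom ha w) 0 := by
  let b := cyclicBasis n a
  have key : (dotProductBilin A A).compl₁₂ b.equivFun.toLinearMap b.equivFun.toLinearMap =
      ((LinearMap.mul A _).compl₂ (invRootHom ha).toLinearMap).compr₂
        ((LinearMap.proj 0).comp b.equivFun.toLinearMap) :=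
    LinearMap.ext_basis b b fun i j => by
      simp only [LinearMap.compl₁₂_apply, LinearEquiv.coe_coe, Module.Basis.equivFun_apply,
        Module.Basis.repr_self, Finsupp.single_eq_pi_single, dotProductBilin_apply_apply,
        dotProduct_single, mul_one, LinearMap.compr₂_apply, LinearMap.compl₂_apply,
        AlgHom.toLinearMap_apply, LinearMap.mul_apply_apply, LinearMap.coe_comp, LinearMap.coe_proj,
        Function.comp_apply, Function.eval, b]
      rw [cyclicBasis_apply, cyclicBasis_apply, map_pow, invRootHom_root,
        ← Module.Basis.equivFun_apply, equivFun_root_pow_mul_rootInv_pow ha, Pi.single_apply]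
      exact if_congr eq_comm rfl rfl
  exact LinearMap.congr_fun₂ key z w

lemma equivFun_apply_eq_mul_rootInv_pow (y : AdjoinRoot (X ^ n - C a)) (j : Fin n) :
    (cyclicBasis n a).equivFun y j = (cyclicBasis n a).equivFun (y * rootInv a ^ (j : ℕ)) 0 := by
  rw [← invRootHom_root ha, ← map_pow, ← dotProduct_equivFun ha, equivFun_root_pow j.isLt,
    dotProduct_single, mul_one]

lemma forall_dotProduct_eq_zero_iff (z g : AdjoinRoot (X ^ n - C a)) :
    (∀ w ∈ Ideal.span {g}, (cyclicBasis n a).equivFun z ⬝ᵥ (cyclicBasis n a).equivFun w = 0) ↔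
      z * invRootHom ha g = 0 := by
  constructor
  · intro h
    apply (cyclicBasis n a).equivFun.injective
    ext j
    rw [map_zero, Pi.zero_apply, equivFun_apply_eq_mul_rootInv_pow ha, ← invRootHom_root ha,
      ← map_pow, mul_assoc, ← map_mul, ← dotProduct_equivFun ha]
    exact h _ (Ideal.mul_mem_right _ _ (Ideal.mem_span_singleton_self g))
  · intro h w hw
    obtain ⟨t, rfl⟩ := Ideal.mem_span_singleton'.mp hw
    rw [dotProduct_equivFun ha, map_mul (invRootHom ha), mul_left_comm, h, mul_zero, map_zero,
      Pi.zero_apply]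

end Duality

lemma reverse_X_pow_sub_C {A : Type*} [CommRing A] [Nontrivial A] (n : ℕ) (a : A) :
    (X ^ n - C a : A[X]).reverse = 1 - C a * X ^ n := by
  rw [reverse, natDegree_X_pow_sub_C, reflect_sub, reflect_monomial, reflect_C, revAt_le le_rfl,
    Nat.sub_self, pow_zero]

lemma natDegree_reverse_of_mul_eq_X_pow_sub_C {A : Type*} [CommRing A] {n : ℕ} (hn : n ≠ 0)
    {a : A} (ha : a ≠ 0) {f h : A[X]} (hfh : f * h = X ^ n - C a) :
    f.reverse.natDegree = f.natDegree := by
  rw [reverse_natDegree, natTrailingDegree_eq_zero.mpr (Or.inr fun hf0 => ha ?_), Nat.sub_zero]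
  simpa [mul_coeff_zero, hf0, coeff_X_pow, hn.symm] using congrArg (coeff · 0) hfh

lemma associated_reverse_mul_reverse {K : Type*} [CommRing K] [IsDomain K] {n : ℕ} {a : K}
    (ha : a * a = 1) {f h : K[X]} (hfh : f * h = X ^ n - C a) :
    Associated (f.reverse * h.reverse) (X ^ n - C a) := by
  have hC : C a * C a = (1 : K[X]) := by rw [← C_mul, ha, C_1]
  refine ⟨(IsUnit.of_mul_eq_one (-C a) (by rw [neg_mul_neg, hC])).unit, ?_⟩
  rw [IsUnit.unit_spec, ← reverse_mul_of_domain, hfh, reverse_X_pow_sub_C]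
  linear_combination (X ^ n : K[X]) * hC

lemma mul_mk_eq_zero_iff {K : Type*} [CommRing K] [IsDomain K] {M f g : K[X]}
    (hfg : Associated (f * g) M) (hf : f ≠ 0) (z : AdjoinRoot M) :
    z * mk M f = 0 ↔ z ∈ Ideal.span {mk M g} := by
  induction z using AdjoinRoot.induction_on with | ih b => ?_
  have hgM : g ∣ M := (Dvd.intro_left f rfl).trans hfg.dvd
  rw [← map_mul, mk_eq_zero, ← hfg.dvd_iff_dvd_left, mul_comm b, mul_dvd_mul_iff_left hf,
    Ideal.mem_span_singleton']
  constructor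
  · rintro ⟨s, rfl⟩
    exact ⟨mk M s, by rw [← map_mul, mul_comm]⟩
  · rintro ⟨t, ht⟩
    induction t using AdjoinRoot.induction_on with | ih s => ?_
    rw [← map_mul, mk_eq_mk] at ht
    exact (dvd_sub_right (dvd_mul_left g s)).mp (hgM.trans ht)

lemma card_span_mk {K : Type*} [Field K] {M f g : K[X]} (hfg : Associated (f * g) M)
    (hM : M ≠ 0) : Nat.card (Ideal.span {mk M g}) = Nat.card K ^ f.natDegree := by
  obtain ⟨hf, hg⟩ := mul_ne_zero_iff.mp (hfg.ne_zero_iff.mpr hM)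
  let φ : K[X] →ₗ[K] AdjoinRoot M := (mkₐ M).toLinearMap ∘ₗ LinearMap.mulRight K g
  have hφ (p : K[X]) : φ p = mk M p * mk M g := map_mul (mk M) p g
  have hker : LinearMap.ker φ = (Ideal.span {f}).restrictScalars K := by
    ext p
    rw [LinearMap.mem_ker, hφ, ← map_mul, mk_eq_zero, Submodule.restrictScalars_mem,
      Ideal.mem_span_singleton, ← hfg.dvd_iff_dvd_left, mul_dvd_mul_iff_right hg]
  have hrange : (LinearMap.range φ : Set (AdjoinRoot M)) = Ideal.span {mk M g} := by
    ext z
    simp only [SetLike.mem_coe, LinearMap.mem_range, hφ, Ideal.mem_span_singleton']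
    constructor
    · rintro ⟨p, rfl⟩
      exact ⟨mk M p, rfl⟩
    · rintro ⟨t, rfl⟩
      induction t using AdjoinRoot.induction_on with | ih p => exact ⟨p, rfl⟩
  calc Nat.card (Ideal.span {mk M g}) = Nat.card (LinearMap.range φ) :=
        Nat.card_congr (Equiv.setCongr hrange.symm)
    _ = Nat.card (AdjoinRoot f) :=
        Nat.card_congr (φ.quotKerEquivRange.symm.trans ((Submodule.quotEquivOfEq _ _ hker).trans
          (Submodule.Quotient.restrictScalarsEquiv K _))).toEquiv
    _ = Nat.card K ^ f.natDegree := by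
        rw [Nat.card_congr (AdjoinRoot.powerBasis hf).basis.equivFun.toEquiv, Nat.card_fun]
        simp

section Field

variable {K : Type*} [Field K] {n : ℕ} [NeZero n] {a : K} (ha : a * a = 1)
  {D : Set (Fin n → K)} {f h : K[X]} (hfh : f * h = X ^ n - C a)
  (hD : ∀ c, c ∈ D ↔ (cyclicBasis n a).equivFun.symm c ∈ Ideal.span {mk _ f})
include ha hfh hD

lemma orthogonal_iff_mem_span_reverse (c : Fin n → K) :
    (∀ y ∈ D, c ⬝ᵥ y = 0) ↔ (cyclicBasis n a).equivFun.symm c ∈ Ideal.span {mk _ h.reverse} := by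
  set e := (cyclicBasis n a).equivFun
  have hf : f.reverse ≠ 0 := fun h0 => (monic_X_pow_sub_C a (NeZero.ne n)).ne_zero
    (by rw [← hfh, reverse_eq_zero.mp h0, zero_mul])
  have hunit : IsUnit (rootInv (n := n) a ^ f.natDegree) :=
    (IsUnit.of_mul_eq_one_right _ (root_mul_rootInv ha)).pow _
  calc (∀ y ∈ D, c ⬝ᵥ y = 0) ↔ ∀ w ∈ Ideal.span {mk _ f}, e (e.symm c) ⬝ᵥ e w = 0 := by
        rw [e.apply_symm_apply]
        refine ⟨fun H w hw => H _ ((hD _).mpr (by rwa [e.symm_apply_apply])), fun H y hy => ?_⟩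
        simpa using H _ ((hD y).mp hy)
    _ ↔ e.symm c * invRootHom ha (mk _ f) = 0 := forall_dotProduct_eq_zero_iff ha _ _
    _ ↔ e.symm c * mk _ f.reverse = 0 := by
        rw [invRootHom_mk, ← mul_assoc, hunit.mul_left_eq_zero]
    _ ↔ _ := mul_mk_eq_zero_iff (associated_reverse_mul_reverse ha hfh) hf _

lemma card_orthogonal : Nat.card {c // ∀ y ∈ D, c ⬝ᵥ y = 0} = Nat.card K ^ f.natDegree := by
  rw [Nat.card_congr ((cyclicBasis n a).equivFun.symm.toEquiv.subtypeEquiv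
      (orthogonal_iff_mem_span_reverse ha hfh hD)),
    card_span_mk (associated_reverse_mul_reverse ha hfh)
      (monic_X_pow_sub_C a (NeZero.ne n)).ne_zero,
    natDegree_reverse_of_mul_eq_X_pow_sub_C (NeZero.ne n) (left_ne_zero_of_mul_eq_one ha) hfh]

end Field

section CyclicMap

variable {A B : Type*} [CommRing A] [CommRing B] (n : ℕ) (φ : A →+* B) {a : A} {b : B}
  (hab : φ a = b)

noncomputable def cyclicMap : AdjoinRoot (X ^ n - C a) →+* AdjoinRoot (X ^ n - C b) :=
  AdjoinRoot.map φ _ _ (by rw [Polynomial.map_sub, Polynomial.map_pow, map_X, map_C, hab])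

lemma cyclicMap_mk (p : A[X]) : cyclicMap n φ hab (mk _ p) = mk _ (p.map φ) := by
  have : (cyclicMap n φ hab).comp (mk _) = (mk _).comp (mapRingHom φ) := by
    ext <;> simp [cyclicMap]
  exact RingHom.congr_fun this p

lemma cyclicMap_equivFun_symm [Nontrivial A] [Nontrivial B] [NeZero n] (c : Fin n → A) :
    cyclicMap n φ hab ((cyclicBasis n a).equivFun.symm c) =
      (cyclicBasis n b).equivFun.symm (φ ∘ c) := by
  rw [← mk_sum_C_mul_X_pow, ← mk_sum_C_mul_X_pow, cyclicMap_mk]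
  simp [Polynomial.map_sum]

end CyclicMap

section TernaryCodes

variable {n : ℕ} [NeZero n]

-- `AdjoinRoot g` is by definition `R[X] ⧸ Ideal.span {g}`, so `mkZ n ε` is `AdjoinRoot.mk`.
lemma mkZ_toPolyZ (ε : ZMod 3) (c : Fin n → ZMod 3) :
    mkZ n ε (toPolyZ c) = (cyclicBasis n ε).equivFun.symm c :=
  mk_sum_C_mul_X_pow n ε c

variable {ε : ZMod 3} {D : Submodule (ZMod 3) (Fin n → ZMod 3)} {f : (ZMod 3)[X]}

lemma IsGenPolyZ.mem_iff (hg : IsGenPolyZ n ε D f) (c : Fin n → ZMod 3) :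
    c ∈ D ↔ (cyclicBasis n ε).equivFun.symm c ∈ Ideal.span {mk _ f} := by
  have hD := hg.2.2
  simp only [mkZ_toPolyZ] at hD
  exact (setOf_exists_mem_eq_iff (cyclicBasis n ε).equivFun.symm.toEquiv _ _).mp hD c

variable (hε : ε * ε = 1) {h : (ZMod 3)[X]} (hfh : f * h = X ^ n - C ε)
include hε hfh

lemma IsGenPolyZ.mem_dualZ_iff (hg : IsGenPolyZ n ε D f) (c : Fin n → ZMod 3) :
    c ∈ dualZ D ↔ (cyclicBasis n ε).equivFun.symm c ∈ Ideal.span {mk _ h.reverse} :=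
  orthogonal_iff_mem_span_reverse hε hfh hg.mem_iff c

lemma IsGenPolyZ.card_dualZ (hg : IsGenPolyZ n ε D f) : Nat.card (dualZ D) = 3 ^ f.natDegree :=
  (card_orthogonal hε hfh hg.mem_iff).trans (by rw [Nat.card_zmod])

end TernaryCodes

instance : Nontrivial R3 := ⟨⟨0, 1, fun h => zero_ne_one (congrArg R3.a h)⟩⟩

def grayRingEquiv : R3 ≃+* ZMod 3 × ZMod 3 × ZMod 3 where
  toFun := gray
  invFun p := ⟨p.1, 2 * p.2.1 + p.2.2, 2 * p.1 + 2 * p.2.1 + 2 * p.2.2⟩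
  left_inv r := by
    ext <;> simp only [gray] <;> ring_nf <;> reduce_mod_char
  right_inv p := by
    ext <;> simp only [gray] <;> ring_nf <;> reduce_mod_char
  map_mul' x y := by
    ext <;> simp only [gray, R3.mul_a, R3.mul_b, R3.mul_c, Prod.fst_mul, Prod.snd_mul]
    · ring
    · ring_nf
      reduce_mod_char
  map_add' x y := by
    ext <;> simp only [gray, R3.add_a, R3.add_b, R3.add_c, Prod.fst_add, Prod.snd_add] <;> ring

def gray₁ : R3 →+* ZMod 3 := (RingHom.fst _ _).comp grayRingEquiv.toRingHom
def gray₂ : R3 →+* ZMod 3 := ((RingHom.fst _ _).comp (RingHom.snd _ _)).comp grayRingEquiv.toRingHom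
def gray₃ : R3 →+* ZMod 3 := ((RingHom.snd _ _).comp (RingHom.snd _ _)).comp grayRingEquiv.toRingHom

lemma grayRingEquiv_apply (r : R3) : grayRingEquiv r = (gray₁ r, gray₂ r, gray₃ r) := rfl

lemma grayRingEquiv_iota (s : ZMod 3) : grayRingEquiv (R3.iota s) = (s, s, s) := by
  simp [grayRingEquiv, gray, R3.iota]

lemma gray₁_iota (s : ZMod 3) : gray₁ (R3.iota s) = s := congrArg (·.1) (grayRingEquiv_iota s)
lemma gray₂_iota (s : ZMod 3) : gray₂ (R3.iota s) = s := congrArg (·.2.1) (grayRingEquiv_iota s)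
lemma gray₃_iota (s : ZMod 3) : gray₃ (R3.iota s) = s := congrArg (·.2.2) (grayRingEquiv_iota s)

lemma grayRingEquiv_v : grayRingEquiv R3.v = (0, 1, 2) := rfl

lemma grayRingEquiv_e1 : grayRingEquiv e1 = (1, 0, 0) := by
  rw [e1, map_add, map_one, map_mul, map_pow, map_ofNat, grayRingEquiv_v]; decide

lemma grayRingEquiv_e2 : grayRingEquiv e2 = (0, 1, 0) := by
  rw [e2, map_add, map_mul, map_mul, map_pow, map_ofNat, grayRingEquiv_v]; decide

lemma grayRingEquiv_e3 : grayRingEquiv e3 = (0, 0, 1) := by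
  rw [e3, map_add, map_mul, map_pow, map_ofNat, grayRingEquiv_v]; decide

section DualR

variable {n : ℕ} {C : Submodule R3 (Fin n → R3)} {C₁ C₂ C₃ : Submodule (ZMod 3) (Fin n → ZMod 3)}

lemma grayRingEquiv_tri_apply (x y z : Fin n → ZMod 3) (i : Fin n) :
    grayRingEquiv ((e1 • emb x + e2 • emb y + e3 • emb z) i) = (x i, y i, z i) := by
  simp [emb, grayRingEquiv_iota, grayRingEquiv_e1, grayRingEquiv_e2, grayRingEquiv_e3]

lemma grayRingEquiv_dotProduct_tri (c : Fin n → R3) (x y z : Fin n → ZMod 3) :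
    grayRingEquiv (c ⬝ᵥ (e1 • emb x + e2 • emb y + e3 • emb z)) =
      (gray₁ ∘ c ⬝ᵥ x, gray₂ ∘ c ⬝ᵥ y, gray₃ ∘ c ⬝ᵥ z) := by
  simp only [dotProduct, map_sum, map_mul grayRingEquiv, grayRingEquiv_tri_apply]
  simp only [grayRingEquiv_apply]
  ext <;> simp [Prod.fst_sum, Prod.snd_sum]

lemma mem_dualR_iff (hC : (C : Set (Fin n → R3)) = tri (C₁ : Set (Fin n → ZMod 3)) C₂ C₃)
    (c : Fin n → R3) :
    c ∈ dualR C ↔ gray₁ ∘ c ∈ dualZ C₁ ∧ gray₂ ∘ c ∈ dualZ C₂ ∧ gray₃ ∘ c ∈ dualZ C₃ := by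
  have key (x y z : Fin n → ZMod 3) : c ⬝ᵥ (e1 • emb x + e2 • emb y + e3 • emb z) = 0 ↔
      gray₁ ∘ c ⬝ᵥ x = 0 ∧ gray₂ ∘ c ⬝ᵥ y = 0 ∧ gray₃ ∘ c ⬝ᵥ z = 0 := by
    rw [← map_eq_zero_iff grayRingEquiv grayRingEquiv.injective, grayRingEquiv_dotProduct_tri,
      Prod.mk_eq_zero, Prod.mk_eq_zero]
  change (∀ w ∈ C, c ⬝ᵥ w = 0) ↔ (∀ x ∈ C₁, gray₁ ∘ c ⬝ᵥ x = 0) ∧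
    (∀ y ∈ C₂, gray₂ ∘ c ⬝ᵥ y = 0) ∧ (∀ z ∈ C₃, gray₃ ∘ c ⬝ᵥ z = 0)
  simp only [← SetLike.mem_coe, hC]
  constructor
  · intro h
    refine ⟨fun x hx => ((key x 0 0).mp (h _ ⟨x, hx, 0, C₂.zero_mem, 0, C₃.zero_mem, rfl⟩)).1,
      fun y hy => ((key 0 y 0).mp (h _ ⟨0, C₁.zero_mem, y, hy, 0, C₃.zero_mem, rfl⟩)).2.1,
      fun z hz => ((key 0 0 z).mp (h _ ⟨0, C₁.zero_mem, 0, C₂.zero_mem, z, hz, rfl⟩)).2.2⟩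
  · rintro ⟨h₁, h₂, h₃⟩ w ⟨x, hx, y, hy, z, hz, rfl⟩
    exact (key x y z).mpr ⟨h₁ x hx, h₂ y hy, h₃ z hz⟩

lemma card_dualR (hC : (C : Set (Fin n → R3)) = tri (C₁ : Set (Fin n → ZMod 3)) C₂ C₃) :
    Nat.card (dualR C) = Nat.card (dualZ C₁) * Nat.card (dualZ C₂) * Nat.card (dualZ C₃) := by
  let E : (Fin n → R3) ≃ (Fin n → ZMod 3) × (Fin n → ZMod 3) × (Fin n → ZMod 3) :=
    (Equiv.piCongrRight fun _ => grayRingEquiv.toEquiv).trans <|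
      (Equiv.arrowProdEquivProdArrow _ _ _).trans <|
        (Equiv.refl _).prodCongr (Equiv.arrowProdEquivProdArrow _ _ _)
  let e : dualR C ≃ dualZ C₁ × dualZ C₂ × dualZ C₃ :=
    (E.subtypeEquiv (mem_dualR_iff hC)).trans <|
      Equiv.subtypeProdEquivProd.trans <| (Equiv.refl _).prodCongr Equiv.subtypeProdEquivProd
  rw [Nat.card_congr e, Nat.card_prod, Nat.card_prod, mul_assoc]

end DualR

section GrayCyclic

variable (n : ℕ) (ε : ZMod 3)

noncomputable def grayCyclicHom : AdjoinRoot (X ^ n - C (R3.iota ε)) →+*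
    AdjoinRoot (X ^ n - C ε) × AdjoinRoot (X ^ n - C ε) × AdjoinRoot (X ^ n - C ε) :=
  (cyclicMap n gray₁ (gray₁_iota ε)).prod
    ((cyclicMap n gray₂ (gray₂_iota ε)).prod (cyclicMap n gray₃ (gray₃_iota ε)))

lemma grayCyclicHom_mk (g₁ g₂ g₃ : (ZMod 3)[X]) :
    grayCyclicHom n ε
        (mk _ (C e1 * g₁.map R3.iota + C e2 * g₂.map R3.iota + C e3 * g₃.map R3.iota)) =
      (mk _ g₁, mk _ g₂, mk _ g₃) := by
  have h₁ := grayRingEquiv_e1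
  have h₂ := grayRingEquiv_e2
  have h₃ := grayRingEquiv_e3
  simp only [grayRingEquiv_apply, Prod.mk.injEq] at h₁ h₂ h₃
  have hι (π : R3 →+* ZMod 3) (hπ : ∀ s, π (R3.iota s) = s) : π.comp R3.iota = RingHom.id _ :=
    RingHom.ext hπ
  simp only [grayCyclicHom, RingHom.prod_apply, cyclicMap_mk]
  simp [Polynomial.map_map, h₁, h₂, h₃, hι _ gray₁_iota, hι _ gray₂_iota, hι _ gray₃_iota]

variable [NeZero n]

lemma grayCyclicHom_equivFun_symm (c : Fin n → R3) :
    grayCyclicHom n ε ((cyclicBasis n (R3.iota ε)).equivFun.symm c) =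
      ((cyclicBasis n ε).equivFun.symm (gray₁ ∘ c), (cyclicBasis n ε).equivFun.symm (gray₂ ∘ c),
        (cyclicBasis n ε).equivFun.symm (gray₃ ∘ c)) := by
  simp only [grayCyclicHom, RingHom.prod_apply, cyclicMap_equivFun_symm]

lemma grayCyclicHom_bijective : Function.Bijective (grayCyclicHom n ε) := by
  refine ⟨fun z w hzw => ?_, fun ⟨u₁, u₂, u₃⟩ => ?_⟩
  · obtain ⟨c, rfl⟩ := (cyclicBasis n (R3.iota ε)).equivFun.symm.surjective z
    obtain ⟨d, rfl⟩ := (cyclicBasis n (R3.iota ε)).equivFun.symm.surjective w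
    simp only [grayCyclicHom_equivFun_symm, Prod.mk.injEq, EmbeddingLike.apply_eq_iff_eq] at hzw
    obtain ⟨h₁, h₂, h₃⟩ := hzw
    congr 1
    funext i
    apply grayRingEquiv.injective
    rw [grayRingEquiv_apply, grayRingEquiv_apply]
    exact Prod.ext (congrFun h₁ i) (Prod.ext (congrFun h₂ i) (congrFun h₃ i))
  · induction u₁ using AdjoinRoot.induction_on with | ih g₁ => ?_
    induction u₂ using AdjoinRoot.induction_on with | ih g₂ => ?_
    induction u₃ using AdjoinRoot.induction_on with | ih g₃ => ?_
    exact ⟨_, grayCyclicHom_mk n ε g₁ g₂ g₃⟩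

lemma mkR_toPolyR (c : Fin n → R3) :
    mkR n (R3.iota ε) (toPolyR c) = (cyclicBasis n (R3.iota ε)).equivFun.symm c :=
  mk_sum_C_mul_X_pow n _ c

variable {n ε}

lemma mem_dualR_iff_mem_span {C : Submodule R3 (Fin n → R3)}
    {C₁ C₂ C₃ : Submodule (ZMod 3) (Fin n → ZMod 3)}
    (hC : (C : Set (Fin n → R3)) = tri (C₁ : Set (Fin n → ZMod 3)) C₂ C₃) {g₁ g₂ g₃ : (ZMod 3)[X]}
    (hg₁ : ∀ c, c ∈ dualZ C₁ ↔ (cyclicBasis n ε).equivFun.symm c ∈ Ideal.span {mk _ g₁})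
    (hg₂ : ∀ c, c ∈ dualZ C₂ ↔ (cyclicBasis n ε).equivFun.symm c ∈ Ideal.span {mk _ g₂})
    (hg₃ : ∀ c, c ∈ dualZ C₃ ↔ (cyclicBasis n ε).equivFun.symm c ∈ Ideal.span {mk _ g₃})
    (c : Fin n → R3) :
    c ∈ dualR C ↔ (cyclicBasis n (R3.iota ε)).equivFun.symm c ∈
      Ideal.span {mk _ (Polynomial.C e1 * g₁.map R3.iota + Polynomial.C e2 * g₂.map R3.iota +
        Polynomial.C e3 * g₃.map R3.iota)} := by
  simp only [mem_dualR_iff hC, hg₁, hg₂, hg₃, Ideal.mem_span_singleton]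
  conv_rhs => rw [← map_dvd_iff (RingEquiv.ofBijective _ (grayCyclicHom_bijective n ε))]
  simp only [RingEquiv.ofBijective_apply, grayCyclicHom_mk, grayCyclicHom_equivFun_symm,
    Prod.mk_dvd_mk]

end GrayCyclic

theorem statement13_general (n : ℕ) [NeZero n] (ε : ZMod 3) (hε : ε = 1 ∨ ε = -1)
    (C : Submodule R3 (Fin n → R3))
    (C₁ C₂ C₃ : Submodule (ZMod 3) (Fin n → ZMod 3))
    (f₁ f₂ f₃ h₁ h₂ h₃ : Polynomial (ZMod 3))
    (hg₁ : IsGenPolyZ n ε (C₁ : Set (Fin n → ZMod 3)) f₁)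
    (hg₂ : IsGenPolyZ n ε (C₂ : Set (Fin n → ZMod 3)) f₂)
    (hg₃ : IsGenPolyZ n ε (C₃ : Set (Fin n → ZMod 3)) f₃)
    (hh₁ : f₁ * h₁ = Polynomial.X ^ n - Polynomial.C ε)
    (hh₂ : f₂ * h₂ = Polynomial.X ^ n - Polynomial.C ε)
    (hh₃ : f₃ * h₃ = Polynomial.X ^ n - Polynomial.C ε)
    (hC : (C : Set (Fin n → R3)) = tri (C₁ : Set (Fin n → ZMod 3)) C₂ C₃) :
    {p | ∃ c ∈ dualR C, p = mkR n (R3.iota ε) (toPolyR c)} =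
      ↑(Ideal.span {mkR n (R3.iota ε)
        (Polynomial.C e1 * h₁.reverse.map R3.iota +
         Polynomial.C e2 * h₂.reverse.map R3.iota +
         Polynomial.C e3 * h₃.reverse.map R3.iota)}) ∧
    Nat.card (dualR C) = 3 ^ (f₁.natDegree + f₂.natDegree + f₃.natDegree) := by
  have hε' : ε * ε = 1 := by rcases hε with rfl | rfl <;> decide
  constructor
  · simp only [mkR_toPolyR]
    exact (setOf_exists_mem_eq_iff (cyclicBasis n (R3.iota ε)).equivFun.symm.toEquiv _ _).mpr
      (mem_dualR_iff_mem_span hC (hg₁.mem_dualZ_iff hε' hh₁) (hg₂.mem_dualZ_iff hε' hh₂)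
        (hg₃.mem_dualZ_iff hε' hh₃))
  · rw [card_dualR hC, hg₁.card_dualZ hε' hh₁, hg₂.card_dualZ hε' hh₂, hg₃.card_dualZ hε' hh₃,
      ← pow_add, ← pow_add]

/-- Let `C = (1+2v²)C₁ ⊕ (2v+2v²)C₂ ⊕ (v+2v²)C₃` be a cyclic (`ε = 1`)
resp. negacyclic (`ε = -1`) code of length `n` over `R`, where `fᵢ` is the generator
polynomial of `Cᵢ` and `hᵢ = (xⁿ - ε)/fᵢ`. Then, in `R[x]/(xⁿ - ε)`,
`C^⊥ = ⟨(1+2v²)h₁* + (2v+2v²)h₂* + (v+2v²)h₃*⟩` where `hᵢ*` is the reciprocal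
polynomial of `hᵢ`, and `|C^⊥| = 3^{deg f₁ + deg f₂ + deg f₃}`. -/
theorem statement13 (n : ℕ) [NeZero n] (ε : ZMod 3) (hε : ε = 1 ∨ ε = -1)
    (C : Submodule R3 (Fin n → R3))
    (C₁ C₂ C₃ : Submodule (ZMod 3) (Fin n → ZMod 3))
    (f₁ f₂ f₃ h₁ h₂ h₃ : Polynomial (ZMod 3))
    (hg₁ : IsGenPolyZ n ε (C₁ : Set (Fin n → ZMod 3)) f₁)
    (hg₂ : IsGenPolyZ n ε (C₂ : Set (Fin n → ZMod 3)) f₂)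
    (hg₃ : IsGenPolyZ n ε (C₃ : Set (Fin n → ZMod 3)) f₃)
    (hh₁ : f₁ * h₁ = Polynomial.X ^ n - Polynomial.C ε)
    (hh₂ : f₂ * h₂ = Polynomial.X ^ n - Polynomial.C ε)
    (hh₃ : f₃ * h₃ = Polynomial.X ^ n - Polynomial.C ε)
    (hC : (C : Set (Fin n → R3)) = tri (C₁ : Set (Fin n → ZMod 3)) C₂ C₃)
    (hShift : consta (R3.iota ε) '' (C : Set (Fin n → R3)) = (C : Set (Fin n → R3))) :
    {p | ∃ c ∈ dualR C, p = mkR n (R3.iota ε) (toPolyR c)} =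
      ↑(Ideal.span {mkR n (R3.iota ε)
        (Polynomial.C e1 * h₁.reverse.map R3.iota +
         Polynomial.C e2 * h₂.reverse.map R3.iota +
         Polynomial.C e3 * h₃.reverse.map R3.iota)}) ∧
    Nat.card (dualR C) = 3 ^ (f₁.natDegree + f₂.natDegree + f₃.natDegree) :=
  statement13_general n ε hε C C₁ C₂ C₃ f₁ f₂ f₃ h₁ h₂ h₃ hg₁ hg₂ hg₃ hh₁ hh₂ hh₃ hC
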